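/- Let X be a finite topological space and x ∈ X. Then for every y ∈ X, Ψ(y,x) ≤ |{a ∈ X : Ψ(x,a) = 0}|, i.e., the furtherness of any point from x is at most the cardinality of the minimal open set U_x. -/

import Mathlib

open Set Topology

/-- The minimal open set containing `x`: the intersection of all open sets containing `x`. -/
def minOpen (X : Type*) [TopologicalSpace X] (x : X) : Set X :=
  ⋂₀ {U : Set X | IsOpen U ∧ x ∈ U}

/-- A nested sequence of open sets around `x`: a sequence of open sets starting at the
minimal open set of `x`, increasing, strictly increasing until it reaches the whole space
(after which it is stationary), with no open set strictly between consecutive terms. -/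
def NestedSeq (X : Type*) [TopologicalSpace X] (x : X) (c : ℕ → Set X) : Prop :=
  c 0 = minOpen X x ∧ (∀ j, IsOpen (c j)) ∧
  (∀ j, c j ⊆ c (j + 1)) ∧
  (∀ j, c j ≠ c (j + 1) ∨ c j = Set.univ) ∧
  (∀ j, ∀ V : Set X, IsOpen V → c j ⊆ V → V ⊆ c (j + 1) → V = c j ∨ V = c (j + 1))

/-- The furtherness `Ψ(x,y)`: the least `k` such that `y` belongs to the `k`-th term of
some nested sequence of open sets around `x`. -/
noncomputable def furth (X : Type*) [TopologicalSpace X] (x y : X) : ℕ :=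
  sInf {k | ∃ c : ℕ → Set X, NestedSeq X x c ∧ y ∈ c k}

section Aux

variable {X : Type*} [TopologicalSpace X] [Finite X]

lemma minOpen_isOpen (x : X) : IsOpen (minOpen X x) :=
  Set.Finite.isOpen_sInter (Set.toFinite _) (fun _ h => h.1)

lemma mem_minOpen (x : X) : x ∈ minOpen X x :=
  Set.mem_sInter.2 fun _ h => h.2

/-- An open "cover step" between `U` and a strictly larger open set `T`. -/
lemma exists_cover (x : X) (U T : Set X) (hU : IsOpen U) (hT : IsOpen T) (hUT : U ⊂ T) :
    ∃ V, IsOpen V ∧ U ⊂ V ∧ V ⊆ T ∧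
      ∀ W, IsOpen W → U ⊆ W → W ⊆ V → W = U ∨ W = V := by
  have hS : ({V : Set X | IsOpen V ∧ U ⊂ V ∧ V ⊆ T}).Nonempty := ⟨T, hT, hUT, subset_rfl⟩
  obtain ⟨V, hV, hmin⟩ := Set.Finite.exists_minimalFor id _ (Set.toFinite _) hS
  refine ⟨V, hV.1, hV.2.1, hV.2.2, fun W hWo hUW hWV => ?_⟩
  by_cases hWU : W = U
  · exact Or.inl hWU
  · right
    have : W ∈ {V : Set X | IsOpen V ∧ U ⊂ V ∧ V ⊆ T} :=
      ⟨hWo, ssubset_of_subset_of_ne hUW (Ne.symm hWU), hWV.trans hV.2.2⟩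
    exact hWV.antisymm (hmin this hWV)

lemma exists_step (x : X) (U : Set X) (hU : IsOpen U) (hne : U ≠ Set.univ) :
    ∃ V, IsOpen V ∧ U ⊂ V ∧
      (∀ W, IsOpen W → U ⊆ W → W ⊆ V → W = U ∨ W = V) ∧
      (x ∉ U → V ⊆ U ∪ minOpen X x) := by
  by_cases hx : x ∈ U
  · obtain ⟨V, h1, h2, _, h4⟩ := exists_cover x U Set.univ hU isOpen_univ
      (ssubset_of_subset_of_ne (Set.subset_univ U) hne)
    exact ⟨V, h1, h2, h4, fun hc => absurd hx hc⟩
  · obtain ⟨V, h1, h2, h3, h4⟩ := exists_cover x U (U ∪ minOpen X x) hU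
      (hU.union (minOpen_isOpen x))
      (ssubset_of_subset_of_ne Set.subset_union_left
        (fun he => hx (he ▸ Set.mem_union_right U (mem_minOpen x))))
    exact ⟨V, h1, h2, h4, fun _ => h3⟩

open Classical in
/-- One step of a nested sequence, steered (while `x ∉ U`) to stay inside `U ∪ minOpen X x`. -/
noncomputable def stepSet (x : X) (U : Set X) : Set X :=
  if h : IsOpen U ∧ U ≠ Set.univ then Classical.choose (exists_step x U h.1 h.2)
  else Set.univ

lemma stepSet_spec (x : X) (U : Set X) (hU : IsOpen U) :
    IsOpen (stepSet x U) ∧ U ⊆ stepSet x U ∧ (U ≠ Set.univ → U ≠ stepSet x U) ∧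
      (∀ W, IsOpen W → U ⊆ W → W ⊆ stepSet x U → W = U ∨ W = stepSet x U) ∧
      (x ∉ U → stepSet x U ⊆ U ∪ minOpen X x) := by
  by_cases h : U = Set.univ
  · have hs : stepSet x U = Set.univ := by
      rw [stepSet]
      rw [dif_neg]; intro hc; exact hc.2 h
    refine ⟨hs ▸ isOpen_univ, hs ▸ Set.subset_univ U, fun hne => absurd h hne, ?_, ?_⟩
    · intro W hWo hUW hWs
      left
      rw [h]
      exact Set.eq_univ_of_univ_subset (h ▸ hUW)
    · intro hx
      exact absurd (h ▸ Set.mem_univ x) hx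
  · have hd : IsOpen U ∧ U ≠ Set.univ := ⟨hU, h⟩
    rw [stepSet, dif_pos hd]
    obtain ⟨h1, h2, h3, h4⟩ := Classical.choose_spec (exists_step x U hd.1 hd.2)
    exact ⟨h1, h2.1, fun _ => h2.ne, h3, h4⟩

variable (x y : X)

/-- The nested sequence around `y`, steered toward `x`. -/
noncomputable def nseq : ℕ → Set X
  | 0 => minOpen X y
  | n + 1 => stepSet x (nseq n)

lemma nseq_isOpen : ∀ j, IsOpen (nseq x y j)
  | 0 => minOpen_isOpen y
  | n + 1 => (stepSet_spec x _ (nseq_isOpen n)).1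

lemma nseq_nested : NestedSeq X y (nseq x y) := by
  refine ⟨rfl, nseq_isOpen x y, fun j => (stepSet_spec x _ (nseq_isOpen x y j)).2.1,
    fun j => ?_, fun j => (stepSet_spec x _ (nseq_isOpen x y j)).2.2.2.1⟩
  by_cases h : nseq x y j = Set.univ
  · exact Or.inr h
  · exact Or.inl ((stepSet_spec x _ (nseq_isOpen x y j)).2.2.1 h)

lemma nseq_count : ∀ j, x ∉ nseq x y j →
    j ≤ ((nseq x y j ∩ (minOpen X x \ {x})).ncard) := by
  intro j
  induction j with
  | zero => intro _; exact Nat.zero_le _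
  | succ n ih =>
    intro hx1
    have hsub : nseq x y n ⊆ nseq x y (n + 1) :=
      (stepSet_spec x _ (nseq_isOpen x y n)).2.1
    have hx0 : x ∉ nseq x y n := fun h => hx1 (hsub h)
    have hne : nseq x y n ≠ Set.univ := fun h => hx0 (h ▸ Set.mem_univ x)
    have hneq : nseq x y n ≠ nseq x y (n + 1) :=
      (stepSet_spec x _ (nseq_isOpen x y n)).2.2.1 hne
    obtain ⟨a, ha1, ha0⟩ := Set.exists_of_ssubset (ssubset_of_subset_of_ne hsub hneq)
    have haU : a ∈ minOpen X x := by
      have := (stepSet_spec x _ (nseq_isOpen x y n)).2.2.2.2 hx0 ha1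
      rcases this with h | h
      · exact absurd h ha0
      · exact h
    have hax : a ≠ x := fun h => hx1 (h ▸ ha1)
    have hins : insert a (nseq x y n ∩ (minOpen X x \ {x})) ⊆
        nseq x y (n + 1) ∩ (minOpen X x \ {x}) := by
      intro b hb
      rcases hb with rfl | hb
      · exact ⟨ha1, haU, hax⟩
      · exact ⟨hsub hb.1, hb.2⟩
    have hnotmem : a ∉ nseq x y n ∩ (minOpen X x \ {x}) := fun h => ha0 h.1
    calc n + 1 ≤ (nseq x y n ∩ (minOpen X x \ {x})).ncard + 1 := by
            exact Nat.add_le_add_right (ih hx0) 1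
      _ = (insert a (nseq x y n ∩ (minOpen X x \ {x}))).ncard :=
            (Set.ncard_insert_of_notMem hnotmem (Set.toFinite _)).symm
      _ ≤ (nseq x y (n + 1) ∩ (minOpen X x \ {x})).ncard :=
            Set.ncard_le_ncard hins (Set.toFinite _)

lemma mem_nseq : x ∈ nseq x y ((minOpen X x).ncard) := by
  by_contra hx
  have h1 := nseq_count x y _ hx
  have h2 : (nseq x y ((minOpen X x).ncard) ∩ (minOpen X x \ {x})).ncard ≤
      (minOpen X x \ {x}).ncard :=
    Set.ncard_le_ncard Set.inter_subset_right (Set.toFinite _)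
  have h3 : (minOpen X x \ {x}).ncard = (minOpen X x).ncard - 1 :=
    Set.ncard_diff_singleton_of_mem (mem_minOpen x)
  have h4 : 1 ≤ (minOpen X x).ncard :=
    (Set.ncard_pos (Set.toFinite _)).2 ⟨x, mem_minOpen x⟩
  omega

lemma furth_le_ncard_minOpen : furth X y x ≤ (minOpen X x).ncard :=
  Nat.sInf_le ⟨nseq x y, nseq_nested x y, mem_nseq x y⟩

lemma furth_zero_set : {a : X | furth X x a = 0} = minOpen X x := by
  ext a
  simp only [Set.mem_setOf_eq]
  constructor
  · intro h
    have hne : {k | ∃ c : ℕ → Set X, NestedSeq X x c ∧ a ∈ c k}.Nonempty :=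
      ⟨(minOpen X a).ncard, nseq a x, nseq_nested a x, mem_nseq a x⟩
    rcases Nat.sInf_eq_zero.mp h with h0 | h0
    · obtain ⟨c, hc, hac⟩ := h0
      rw [hc.1] at hac
      exact hac
    · exact absurd h0 (Set.nonempty_iff_ne_empty.mp hne)
  · intro h
    have : 0 ∈ {k | ∃ c : ℕ → Set X, NestedSeq X x c ∧ a ∈ c k} :=
      ⟨nseq a x, nseq_nested a x, h⟩
    exact Nat.le_zero.mp (Nat.sInf_le this)

end Aux

theorem stmt17 (X : Type*) [TopologicalSpace X] [Finite X] (x y : X) :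
    furth X y x ≤ {a : X | furth X x a = 0}.ncard := by
  rw [furth_zero_set x]
  exact furth_le_ncard_minOpen x y
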